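/- If p is a fixed point of a κ-strict pseudo-contraction T and (xₙ) is the Mann iteration with λₙ ∈ (0,1), then for all n: ‖x_{n+1} - p‖² ≤ ‖xₙ - p‖² - (λₙ - κ)(1 - λₙ)‖xₙ - Txₙ‖². -/

import Mathlib

/-! The Mann step is a convex combination, so its squared distance to `p` is the convex combination
of the squared distances of `xₙ` and `T xₙ` minus `λₙ(1 - λₙ)‖xₙ - T xₙ‖²`. Since `T p = p`, the
strict pseudo-contraction inequality bounds `‖T xₙ - p‖²` by `‖xₙ - p‖² + κ‖xₙ - T xₙ‖²`, and
collecting terms gives the claim. The iterates stay in `C` by convexity. -/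

section

variable {H : Type*} [NormedAddCommGroup H] [InnerProductSpace ℝ H]

theorem norm_smul_add_one_sub_smul_sq (t : ℝ) (a b : H) :
    ‖t • a + (1 - t) • b‖ ^ 2
      = t * ‖a‖ ^ 2 + (1 - t) * ‖b‖ ^ 2 - t * (1 - t) * ‖a - b‖ ^ 2 := by
  simp only [← real_inner_self_eq_norm_sq, inner_add_add_self, inner_sub_sub_self,
    real_inner_smul_left, real_inner_smul_right, real_inner_comm a b]
  ring

theorem norm_convexComb_sub_sq_le {t κ : ℝ} (ht : t ≤ 1) {u w p : H}
    (hw : ‖w - p‖ ^ 2 ≤ ‖u - p‖ ^ 2 + κ * ‖u - w‖ ^ 2) :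
    ‖t • u + (1 - t) • w - p‖ ^ 2 ≤ ‖u - p‖ ^ 2 - (t - κ) * (1 - t) * ‖u - w‖ ^ 2 := by
  have hsplit : t • u + (1 - t) • w - p = t • (u - p) + (1 - t) • (w - p) := by module
  have hdiff : u - p - (w - p) = u - w := sub_sub_sub_cancel_right u w p
  rw [hsplit, norm_smul_add_one_sub_smul_sq, hdiff]
  nlinarith [mul_le_mul_of_nonneg_left hw (sub_nonneg.2 ht)]

theorem mann_iterate_mem {C : Set H} (hC : Convex ℝ C) {T : H → H} (hT : Set.MapsTo T C C)
    {lam : ℕ → ℝ} (hlam : ∀ n, lam n ∈ Set.Ioo (0 : ℝ) 1) {x : ℕ → H} (hx0 : x 0 ∈ C)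
    (hxrec : ∀ n, x (n + 1) = lam n • x n + (1 - lam n) • T (x n)) (n : ℕ) : x n ∈ C := by
  induction n with
  | zero => exact hx0
  | succ k ih =>
    rw [hxrec k]
    exact hC ih (hT ih) (hlam k).1.le (sub_pos.2 (hlam k).2).le (add_sub_cancel _ _)

end

theorem stmt_3_general {H : Type*} [NormedAddCommGroup H] [InnerProductSpace ℝ H]
    (C : Set H) (hCconv : Convex ℝ C)
    (κ : ℝ)
    (T : H → H) (hTmap : Set.MapsTo T C C)
    (hT : ∀ u ∈ C, ∀ v ∈ C,
      ‖T u - T v‖ ^ 2 ≤ ‖u - v‖ ^ 2 + κ * ‖(u - T u) - (v - T v)‖ ^ 2)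
    (p : H) (hp : p ∈ C) (hfix : T p = p)
    (lam : ℕ → ℝ) (hlam : ∀ n, lam n ∈ Set.Ioo (0:ℝ) 1)
    (x : ℕ → H) (hx0 : x 0 ∈ C)
    (hxrec : ∀ n, x (n + 1) = lam n • x n + (1 - lam n) • T (x n)) :
    ∀ n : ℕ,
      ‖x (n + 1) - p‖ ^ 2
        ≤ ‖x n - p‖ ^ 2 - (lam n - κ) * (1 - lam n) * ‖x n - T (x n)‖ ^ 2 := by
  intro n
  have hTx : ‖T (x n) - p‖ ^ 2 ≤ ‖x n - p‖ ^ 2 + κ * ‖x n - T (x n)‖ ^ 2 := by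
    simpa [hfix] using hT (x n) (mann_iterate_mem hCconv hTmap hlam hx0 hxrec n) p hp
  rw [hxrec n]
  exact norm_convexComb_sub_sq_le (hlam n).2.le hTx

theorem stmt_3 {H : Type*} [NormedAddCommGroup H] [InnerProductSpace ℝ H]
    (C : Set H) (hCne : C.Nonempty) (hCconv : Convex ℝ C)
    (κ : ℝ) (hκ0 : 0 ≤ κ) (hκ1 : κ < 1)
    (T : H → H) (hTmap : Set.MapsTo T C C)
    (hT : ∀ u ∈ C, ∀ v ∈ C,
      ‖T u - T v‖ ^ 2 ≤ ‖u - v‖ ^ 2 + κ * ‖(u - T u) - (v - T v)‖ ^ 2)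
    (p : H) (hp : p ∈ C) (hfix : T p = p)
    (lam : ℕ → ℝ) (hlam : ∀ n, lam n ∈ Set.Ioo (0:ℝ) 1)
    (x : ℕ → H) (hx0 : x 0 ∈ C)
    (hxrec : ∀ n, x (n + 1) = lam n • x n + (1 - lam n) • T (x n)) :
    ∀ n : ℕ,
      ‖x (n + 1) - p‖ ^ 2
        ≤ ‖x n - p‖ ^ 2 - (lam n - κ) * (1 - lam n) * ‖x n - T (x n)‖ ^ 2 :=
  stmt_3_general C hCconv κ T hTmap hT p hp hfix lam hlam x hx0 hxrec
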